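/- Let A ∈ ℝ^{p×n}, B ∈ ℝ^{q×n}, b ∈ ℝᵖ, d ∈ ℝ^q define a polyhedron with ker(A) ∩ ker(B) = {0}, and consider its homogenization system in variables (t,x) ∈ ℝ × ℝⁿ with equality constraints Ax − tb = 0 and inequality constraints −t ≤ 0 and Bx − td ≤ 0. Then a nonzero vector (γ, g) ∈ ℝ × ℝⁿ is a circuit of this homogenization system if and only if either (i) γ = 0 and g ∈ C(A,B), or (ii) γ ≠ 0 and (1/γ)g is a basic solution of the system Ax = b, Bx ≤ d. -/

import Mathlib

open Matrix

noncomputable section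

/-- The polyhedron `{x : Ax = b, Bx ≤ d}`. -/
def polySet {p q n : Type*} [Fintype n] (A : Matrix p n ℝ) (b : p → ℝ)
    (B : Matrix q n ℝ) (d : q → ℝ) : Set (n → ℝ) :=
  {x | A.mulVec x = b ∧ B.mulVec x ≤ d}

/-- The circuits of the linear description `Ax = b, Bx ≤ d`: nonzero kernel elements `g` of `A`
whose support of `Bg` is inclusion-minimal among nonzero kernel elements. -/
def circuits {p q n : Type*} [Fintype n] (A : Matrix p n ℝ) (B : Matrix q n ℝ) :
    Set (n → ℝ) :=
  {g | A.mulVec g = 0 ∧ g ≠ 0 ∧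
    ∀ y : n → ℝ, A.mulVec y = 0 → y ≠ 0 →
      {i | B.mulVec y i ≠ 0} ⊆ {i | B.mulVec g i ≠ 0} →
      {i | B.mulVec g i ≠ 0} ⊆ {i | B.mulVec y i ≠ 0}}

/-- A face of a polyhedron `P`: either `P` itself or the set of maximizers of a linear
functional over `P` whose supremum is finite and attained. -/
def IsFace {n : Type*} [Fintype n] (P F : Set (n → ℝ)) : Prop :=
  F = P ∨ ∃ (c : n → ℝ) (s : ℝ),
    (∀ y ∈ P, c ⬝ᵥ y ≤ s) ∧ (∃ y ∈ P, c ⬝ᵥ y = s) ∧ F = {x ∈ P | c ⬝ᵥ x = s}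

/-- The dimension of the affine span of a set. -/
def spanDim {n : Type*} [Fintype n] (S : Set (n → ℝ)) : ℕ :=
  Module.finrank ℝ (affineSpan ℝ S).direction

def IsVertex {n : Type*} [Fintype n] (P : Set (n → ℝ)) (v : n → ℝ) : Prop :=
  IsFace P {v}

def IsEdge {n : Type*} [Fintype n] (P F : Set (n → ℝ)) : Prop :=
  IsFace P F ∧ spanDim F = 1

/-- A nonzero vector lying in the direction space of the affine span of some edge of `P`. -/
def IsEdgeDirection {n : Type*} [Fintype n] (P : Set (n → ℝ)) (g : n → ℝ) : Prop :=
  g ≠ 0 ∧ ∃ F, IsEdge P F ∧ g ∈ (affineSpan ℝ F).direction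

/-- A facet: a face whose affine span has dimension `dim P - 1`. -/
def IsFacet {n : Type*} [Fintype n] (P F : Set (n → ℝ)) : Prop :=
  IsFace P F ∧ spanDim F + 1 = spanDim P

/-- A pointed set: contains no affine line. -/
def PointedSet {n : Type*} [Fintype n] (P : Set (n → ℝ)) : Prop :=
  ∀ x v : n → ℝ, (∀ t : ℝ, x + t • v ∈ P) → v = 0

/-- `Ax = b, Bx ≤ d` is an irredundant description of `P`. -/
def Irredundant {p q n : Type*} [Fintype n] (A : Matrix p n ℝ) (b : p → ℝ)
    (B : Matrix q n ℝ) (d : q → ℝ) (P : Set (n → ℝ)) : Prop :=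
  P = polySet A b B d ∧
  {x | A.mulVec x = b} = (affineSpan ℝ P : Set (n → ℝ)) ∧
  ∀ i, IsFacet P {x ∈ P | B.mulVec x i = d i}

/-- A basic solution of the system `Ax = b, Bx ≤ d`: satisfies the equalities, and the rows of
`A` together with the tight rows of `B` span the whole space. -/
def IsBasicSolution {p q n : Type*} [Fintype n] (A : Matrix p n ℝ) (b : p → ℝ)
    (B : Matrix q n ℝ) (d : q → ℝ) (g : n → ℝ) : Prop :=
  A.mulVec g = b ∧
  Submodule.span ℝ (Set.range (fun i => A i) ∪
    (fun i => B i) '' {i | B.mulVec g i = d i}) = ⊤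

/-- Equality matrix `(A | -b)` of the homogenization, acting on vectors `(t, x)`. -/
def homEqMat {p n : ℕ} (A : Matrix (Fin p) (Fin n) ℝ) (b : Fin p → ℝ) :
    Matrix (Fin p) (Unit ⊕ Fin n) ℝ :=
  Matrix.of fun i => Sum.elim (fun _ => -b i) (fun j => A i j)

/-- Inequality matrix of the homogenization: the row `(-1, 0)` together with rows `(−dᵢ | Bᵢ)`. -/
def homIneqMat {q n : ℕ} (B : Matrix (Fin q) (Fin n) ℝ) (d : Fin q → ℝ) :
    Matrix (Unit ⊕ Fin q) (Unit ⊕ Fin n) ℝ :=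
  Matrix.of (Sum.elim
    (fun _ => Sum.elim (fun _ => (-1 : ℝ)) (fun _ => 0))
    (fun i => Sum.elim (fun _ => -d i) (fun j => B i j)))

/-! A circuit `(γ, g)` of the homogenization is tested against kernel vectors `(δ, y)` of smaller
support. For `γ = 0` the row `-t ≤ 0` lies outside the support, which forces `δ = 0`, so minimality
is minimality in `C(A, B)`. For `γ ≠ 0`, scale to `(1, x)`: a nonzero `z` with `Az = 0` vanishing
on the rows of `B` tight at `x` yields `(0, z)`, whose support is strictly smaller since it misses
the row `-t ≤ 0`. Conversely, if no such `z` exists, every `(δ, y)` of smaller support has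
`y = δ • x`, because `y - δ • x` is such a `z`, so it is a nonzero multiple of `(1, x)`. -/

open Function

theorem span_eq_top_iff_dotProduct_eq_zero {K n : Type*} [Field K] [Fintype n]
    {S : Set (n → K)} :
    Submodule.span K S = ⊤ ↔ ∀ z : n → K, (∀ s ∈ S, s ⬝ᵥ z = 0) → z = 0 := by
  classical
  rw [← Submodule.dualAnnihilator_eq_bot_iff, Submodule.eq_bot_iff,
    (dotProductEquiv K n).surjective.forall]
  refine forall_congr' fun z => ?_
  rw [← SetLike.mem_coe, Submodule.coe_dualAnnihilator_span]
  simp [Set.subset_def, dotProduct_comm z]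

section Circuits

variable {p q n : Type*} [Fintype n] {A : Matrix p n ℝ} {B : Matrix q n ℝ}

theorem isBasicSolution_iff {b : p → ℝ} {d : q → ℝ} {x : n → ℝ} :
    IsBasicSolution A b B d x ↔ A *ᵥ x = b ∧
      ∀ z, A *ᵥ z = 0 → (∀ i, (B *ᵥ x) i = d i → (B *ᵥ z) i = 0) → z = 0 := by
  rw [IsBasicSolution, span_eq_top_iff_dotProduct_eq_zero]
  simp only [Set.mem_union, or_imp, forall_and, and_imp, Set.forall_mem_range,
    Set.forall_mem_image, Set.mem_ofPred_eq, funext_iff]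
  rfl

theorem mem_circuits_iff {g : n → ℝ} :
    g ∈ circuits A B ↔ A *ᵥ g = 0 ∧ g ≠ 0 ∧ ∀ y, A *ᵥ y = 0 → y ≠ 0 →
      support (B *ᵥ y) ⊆ support (B *ᵥ g) → support (B *ᵥ g) ⊆ support (B *ᵥ y) :=
  Iff.rfl

theorem smul_mem_circuits_iff {c : ℝ} (hc : c ≠ 0) {g : n → ℝ} :
    c • g ∈ circuits A B ↔ g ∈ circuits A B := by
  simp only [mem_circuits_iff, mulVec_smul, support_const_smul_of_ne_zero _ _ hc,
    smul_ne_zero_iff_right hc, smul_eq_zero, hc, false_or]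

end Circuits

theorem exists_eq_sum_elim {ι α : Type*} (w : Unit ⊕ ι → α) :
    ∃ δ y, w = Sum.elim (fun _ => δ) y :=
  ⟨w (.inl ()), w ∘ .inr, (Sum.elim_comp_inl_inr w).symm.trans (by congr 1)⟩

theorem sum_elim_eq_zero_iff {ι α : Type*} [Zero α] {δ : α} {y : ι → α} :
    Sum.elim (fun _ : Unit => δ) y = 0 ↔ δ = 0 ∧ y = 0 := by
  simp [funext_iff, Sum.forall]

theorem smul_sum_elim_one {ι R : Type*} [Monoid R] (c : R) (x : ι → R) :
    c • Sum.elim (fun _ : Unit => (1 : R)) x = Sum.elim (fun _ => c) (c • x) := by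
  ext (_ | _) <;> simp

section Homogenization

variable {p q n : ℕ} {A : Matrix (Fin p) (Fin n) ℝ} {b : Fin p → ℝ}
  {B : Matrix (Fin q) (Fin n) ℝ} {d : Fin q → ℝ}

theorem homEqMat_mulVec (δ : ℝ) (y : Fin n → ℝ) :
    homEqMat A b *ᵥ Sum.elim (fun _ => δ) y = A *ᵥ y - δ • b := by
  ext i
  simp [homEqMat, mulVec, dotProduct, Fintype.sum_sum_type]
  ring

@[simp]
theorem homIneqMat_mulVec_inl (δ : ℝ) (y : Fin n → ℝ) (u : Unit) :
    (homIneqMat B d *ᵥ Sum.elim (fun _ => δ) y) (.inl u) = -δ := by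
  simp [homIneqMat, mulVec, dotProduct, Fintype.sum_sum_type]

@[simp]
theorem homIneqMat_mulVec_inr (δ : ℝ) (y : Fin n → ℝ) (i : Fin q) :
    (homIneqMat B d *ᵥ Sum.elim (fun _ => δ) y) (.inr i) = (B *ᵥ y) i - δ * d i := by
  simp [homIneqMat, mulVec, dotProduct, Fintype.sum_sum_type]
  ring

theorem support_homIneqMat_mulVec_zero (y : Fin n → ℝ) :
    support (homIneqMat B d *ᵥ Sum.elim (fun _ => 0) y) = Sum.inr '' support (B *ᵥ y) := by
  ext (_ | i) <;> simp

theorem sum_elim_zero_mem_circuits_homogenization_iff {g : Fin n → ℝ} :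
    Sum.elim (fun _ => 0) g ∈ circuits (homEqMat A b) (homIneqMat B d) ↔ g ∈ circuits A B := by
  simp only [mem_circuits_iff, homEqMat_mulVec, zero_smul, sub_zero, ne_eq, sum_elim_eq_zero_iff,
    true_and, support_homIneqMat_mulVec_zero]
  refine and_congr_right fun _ => and_congr_right fun _ =>
    ⟨fun h y hy hy0 => ?_, fun h w hw hw0 hsub => ?_⟩
  · simpa [homEqMat_mulVec, hy, sum_elim_eq_zero_iff, hy0, support_homIneqMat_mulVec_zero,
      Set.image_subset_image_iff Sum.inr_injective] using h (Sum.elim (fun _ => 0) y)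
  · obtain ⟨δ, y, rfl⟩ := exists_eq_sum_elim w
    obtain rfl : δ = 0 := by
      by_contra hδ
      simpa using hsub (show Sum.inl () ∈ support _ by simpa using hδ)
    simp_all [homEqMat_mulVec, sum_elim_eq_zero_iff, support_homIneqMat_mulVec_zero,
      Set.image_subset_image_iff Sum.inr_injective]

theorem sum_elim_one_mem_circuits_homogenization_iff {x : Fin n → ℝ} :
    Sum.elim (fun _ => 1) x ∈ circuits (homEqMat A b) (homIneqMat B d) ↔
      IsBasicSolution A b B d x := by
  rw [mem_circuits_iff, isBasicSolution_iff, homEqMat_mulVec, one_smul, sub_eq_zero]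
  refine and_congr_right fun hx => ?_
  simp only [ne_eq, sum_elim_eq_zero_iff, one_ne_zero, false_and, not_false_eq_true, true_and]
  constructor
  · intro hmin z hz hzT
    by_contra hz0
    have hsub := hmin (Sum.elim (fun _ => 0) z) (by simp [homEqMat_mulVec, hz])
      (by simp [sum_elim_eq_zero_iff, hz0]) ?_
    · simpa [support_homIneqMat_mulVec_zero] using hsub (show Sum.inl () ∈ support _ by simp)
    · rw [support_homIneqMat_mulVec_zero]
      rintro _ ⟨i, hi, rfl⟩
      simpa [sub_eq_zero] using mt (hzT i) hi
  · intro hbasic w hw hw0 hsub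
    obtain ⟨δ, y, rfl⟩ := exists_eq_sum_elim w
    rw [homEqMat_mulVec, sub_eq_zero] at hw
    have hy : y = δ • x := by
      rw [← sub_eq_zero]
      refine hbasic _ (by simp [mulVec_sub, mulVec_smul, hw, hx]) fun i hi => ?_
      have hyi : (B *ᵥ y) i - δ * d i = 0 := by
        by_contra h
        simpa [hi] using hsub (show Sum.inr i ∈ support _ by simpa using h)
      simp [mulVec_sub, mulVec_smul, hi]
      linarith
    have hδ : δ ≠ 0 := by
      rintro rfl
      simp [sum_elim_eq_zero_iff, hy] at hw0
    rw [hy, ← smul_sum_elim_one, mulVec_smul, support_const_smul_of_ne_zero _ _ hδ]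

end Homogenization

theorem stmt_11_general {p q n : ℕ}
    (A : Matrix (Fin p) (Fin n) ℝ) (b : Fin p → ℝ)
    (B : Matrix (Fin q) (Fin n) ℝ) (d : Fin q → ℝ)
    (γ : ℝ) (g : Fin n → ℝ) :
    Sum.elim (fun _ : Unit => γ) g ∈ circuits (homEqMat A b) (homIneqMat B d) ↔
      (γ = 0 ∧ g ∈ circuits A B) ∨
      (γ ≠ 0 ∧ IsBasicSolution A b B d (γ⁻¹ • g)) := by
  rcases eq_or_ne γ 0 with rfl | hγ
  · simp [sum_elim_zero_mem_circuits_homogenization_iff]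
  · rw [← smul_inv_smul₀ hγ g, ← smul_sum_elim_one, smul_mem_circuits_iff hγ,
      sum_elim_one_mem_circuits_homogenization_iff, inv_smul_smul₀ hγ]
    simp [hγ]

/-- For a pointed system, a nonzero `(γ, g)` is a circuit of the homogenization
iff either `γ = 0` and `g ∈ C(A,B)`, or `γ ≠ 0` and `(1/γ)g` is a basic solution. -/
theorem stmt_11 {p q n : ℕ}
    (A : Matrix (Fin p) (Fin n) ℝ) (b : Fin p → ℝ)
    (B : Matrix (Fin q) (Fin n) ℝ) (d : Fin q → ℝ)
    (hpt : ∀ v : Fin n → ℝ, A.mulVec v = 0 → B.mulVec v = 0 → v = 0)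
    (γ : ℝ) (g : Fin n → ℝ)
    (hne : Sum.elim (fun _ : Unit => γ) g ≠ 0) :
    Sum.elim (fun _ : Unit => γ) g ∈ circuits (homEqMat A b) (homIneqMat B d) ↔
      (γ = 0 ∧ g ∈ circuits A B) ∨
      (γ ≠ 0 ∧ IsBasicSolution A b B d (γ⁻¹ • g)) :=
  stmt_11_general A b B d γ g
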